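/- Let K ⊆ V ⊗ k be a strictly characteristic subspace and let e₀ be any generator of the one-dimensional subspace l_K := K ∩ φ(K) ∩ ⋯ ∩ φ^{σ₀−1}(K). Then ⟨e₀, φ^{σ₀}(e₀)⟩ ≠ 0; there exists a generator e of l_K with ⟨e, φ^{σ₀}(e)⟩ = 1; and if e and e′ are two generators of l_K with ⟨e, φ^{σ₀}(e)⟩ = ⟨e′, φ^{σ₀}(e′)⟩ = 1, then e′ = ζ·e for some ζ ∈ k with ζ^{p^{σ₀}+1} = 1. -/

import Mathlib

open TensorProduct

noncomputable section

variable (p : ℕ) [Fact p.Prime] (k : Type) [Field k] [CharP k p] [Algebra (ZMod p) k]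

/-- The `p`-power (Frobenius) map on `k` as a `ZMod p`-linear map. -/
def frobLin : k →ₗ[ZMod p] k where
  toFun a := a ^ p
  map_add' a b := add_pow_char a b p
  map_smul' c a := by
    simp only [RingHom.id_apply]
    rw [Algebra.smul_def, Algebra.smul_def, mul_pow, ← map_pow, ZMod.pow_card]

variable (V : Type) [AddCommGroup V] [Module (ZMod p) V]

/-- The Frobenius-semilinear endomorphism `φ = id_V ⊗ (λ ↦ λ^p)` of `k ⊗[𝔽_p] V`. -/
def frobT : (k ⊗[ZMod p] V) →ₛₗ[frobenius k p] (k ⊗[ZMod p] V) where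
  toFun := LinearMap.rTensor V (frobLin p k)
  map_add' := map_add _
  map_smul' c x := by
    induction x using TensorProduct.induction_on with
    | zero => simp
    | tmul a v =>
        simp [smul_tmul', frobLin, frobenius_def, mul_pow]
    | add x y hx hy => simp_all [smul_add]

variable [IsAlgClosed k]

instance : RingHomSurjective (frobenius k p) := ⟨surjective_frobenius k p⟩

/-- The base change to `k` of the bilinear form `B`. -/
abbrev bcForm (B : LinearMap.BilinForm (ZMod p) V) :
    LinearMap.BilinForm k (k ⊗[ZMod p] V) :=
  LinearMap.BilinForm.baseChange k B

variable (σ₀ : ℕ) (B : LinearMap.BilinForm (ZMod p) V)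

/-- `K ⊆ V ⊗ k` is a characteristic subspace: totally isotropic of dimension `σ₀`,
and `K + φ(K)` has dimension `σ₀ + 1`. -/
def IsCharacteristicSub (K : Submodule k (k ⊗[ZMod p] V)) : Prop :=
  (∀ x ∈ K, ∀ y ∈ K, bcForm p k V B x y = 0) ∧
  Module.finrank k K = σ₀ ∧
  Module.finrank k ↥(K ⊔ Submodule.map (frobT p k V) K) = σ₀ + 1

/-- `K` is strictly characteristic if moreover `∑ᵢ φ^i(K) = V ⊗ k`. -/
def IsStrictlyCharacteristicSub (K : Submodule k (k ⊗[ZMod p] V)) : Prop :=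
  IsCharacteristicSub p k V σ₀ B K ∧
  (⨆ i : ℕ, (Submodule.map (frobT p k V))^[i] K) = ⊤

/-- `l_K = K ∩ φ(K) ∩ ⋯ ∩ φ^{σ₀ − 1}(K)`. -/
def lK (K : Submodule k (k ⊗[ZMod p] V)) : Submodule k (k ⊗[ZMod p] V) :=
  ⨅ i : Fin σ₀, (Submodule.map (frobT p k V))^[(i : ℕ)] K

/-- The group `O_K(V)` of isometries of `(V, B)` such that `g ⊗ k` maps `K` to itself. -/
def OK (K : Submodule k (k ⊗[ZMod p] V)) : Subgroup (V ≃ₗ[ZMod p] V) where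
  carrier := {g : V ≃ₗ[ZMod p] V | (∀ x y : V, B (g x) (g y) = B x y) ∧
    Submodule.map (LinearMap.baseChange k (g : V →ₗ[ZMod p] V)) K = K}
  one_mem' := by
    refine ⟨fun x y => rfl, ?_⟩
    rw [LinearEquiv.coe_toLinearMap_one, LinearMap.baseChange_id, Submodule.map_id]
  mul_mem' := by
    rintro g h ⟨hg1, hg2⟩ ⟨hh1, hh2⟩
    refine ⟨fun x y => (hg1 (h x) (h y)).trans (hh1 x y), ?_⟩
    have hco : ((g * h : V ≃ₗ[ZMod p] V) : V →ₗ[ZMod p] V)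
        = (g : V →ₗ[ZMod p] V).comp (h : V →ₗ[ZMod p] V) := rfl
    rw [hco, LinearMap.baseChange_comp, Submodule.map_comp, hh2, hg2]
  inv_mem' := by
    rintro g ⟨hg1, hg2⟩
    constructor
    · intro x y
      have h1 : g (g⁻¹ x) = x := g.apply_symm_apply x
      have h2 : g (g⁻¹ y) = y := g.apply_symm_apply y
      have := hg1 (g⁻¹ x) (g⁻¹ y)
      rw [h1, h2] at this
      exact this.symm
    · conv_lhs => rw [← hg2]
      rw [← Submodule.map_comp, ← LinearMap.baseChange_comp]
      have hco : ((g⁻¹ : V ≃ₗ[ZMod p] V) : V →ₗ[ZMod p] V).comp (g : V →ₗ[ZMod p] V)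
          = LinearMap.id := by
        ext x
        exact g.symm_apply_apply x
      rw [hco, LinearMap.baseChange_id, Submodule.map_id]

end

section Aux

open Module Submodule

variable (p : ℕ) [Fact p.Prime] (k : Type) [Field k] [CharP k p] [Algebra (ZMod p) k]
  (V : Type) [AddCommGroup V] [Module (ZMod p) V]

lemma frobT_tmul (a : k) (v : V) : frobT p k V (a ⊗ₜ v) = (a ^ p) ⊗ₜ v := rfl

lemma frobT_injective [IsAlgClosed k] : Function.Injective (frobT p k V) := by
  have h1 : Function.Injective (frobLin p k) := by
    intro a b hab
    exact frobenius_inj k p hab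
  have : Function.Injective (LinearMap.rTensor V (frobLin p k)) :=
    Module.Flat.rTensor_preserves_injective_linearMap _ h1
  exact this

lemma bcForm_frob [IsAlgClosed k] (B : LinearMap.BilinForm (ZMod p) V)
    (x y : k ⊗[ZMod p] V) :
    bcForm p k V B (frobT p k V x) (frobT p k V y) = (bcForm p k V B x y) ^ p := by
  induction x using TensorProduct.induction_on with
  | zero => simp [ne_eq, (Fact.out : p.Prime).ne_zero, zero_pow]
  | add x x' hx hx' => simp only [map_add, LinearMap.add_apply, hx, hx', add_pow_char]
  | tmul a v =>
    induction y using TensorProduct.induction_on with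
    | zero => simp [ne_eq, (Fact.out : p.Prime).ne_zero, zero_pow]
    | add y y' hy hy' => simp only [map_add, hy, hy', add_pow_char]
    | tmul b w =>
      rw [frobT_tmul, frobT_tmul]
      rw [LinearMap.BilinForm.baseChange_tmul, LinearMap.BilinForm.baseChange_tmul]
      rw [Algebra.smul_def, Algebra.smul_def, mul_pow, mul_pow, ← map_pow, ZMod.pow_card]

end Aux
section Aux2

open Module Submodule

variable (p : ℕ) [Fact p.Prime] (k : Type) [Field k] [CharP k p] [Algebra (ZMod p) k]
  (V : Type) [AddCommGroup V] [Module (ZMod p) V] [IsAlgClosed k]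

lemma finrank_map_frobT [FiniteDimensional k (k ⊗[ZMod p] V)]
    (W : Submodule k (k ⊗[ZMod p] V)) :
    finrank k (W.map (frobT p k V)) = finrank k W := by
  classical
  haveI : Module.Free k W := Module.Free.of_divisionRing k W
  let b : Basis (Fin (finrank k W)) k W := Module.finBasis k W
  set w : Fin (finrank k W) → (k ⊗[ZMod p] V) := (W.subtype ∘ b) with hw
  have hspan : Submodule.span k (Set.range w) = W := by
    rw [hw, Set.range_comp, Submodule.span_image, b.span_eq, Submodule.map_subtype_top]
  have hmap : W.map (frobT p k V) = Submodule.span k (Set.range (⇑(frobT p k V) ∘ w)) := by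
    rw [Set.range_comp, ← Submodule.map_span, hspan]
  have hli : LinearIndependent k w :=
    W.subtype.linearIndependent_iff_of_injOn (W.injective_subtype.injOn) |>.mpr b.linearIndependent
  have hind : LinearIndependent k (⇑(frobT p k V) ∘ w) := by
    refine hli.map_of_surjective_injective
      (ZeroHom.mk (⇑(frobenius k p)) (map_zero _)) (frobT p k V).toAddMonoidHom
      (surjective_frobenius k p) (fun m hm => frobT_injective p k V (by simpa using hm))
      (fun r m => ?_)
    exact (frobT p k V).map_smulₛₗ r m
  rw [hmap, finrank_span_eq_card hind, Fintype.card_fin]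

omit [CharP k p] [IsAlgClosed k] in
lemma bcForm_symm (B : LinearMap.BilinForm (ZMod p) V) (hsymm : B.IsSymm)
    (x y : k ⊗[ZMod p] V) : bcForm p k V B x y = bcForm p k V B y x := by
  have := (LinearMap.BilinForm.IsSymm.baseChange (A := k) (LinearMap.BilinForm.isSymm_iff.1 hsymm)).eq x y
  simpa using this

lemma bcForm_nondeg [FiniteDimensional (ZMod p) V] (B : LinearMap.BilinForm (ZMod p) V)
    (hnd : B.Nondegenerate) : (bcForm p k V B).Nondegenerate := by
  classical
  let b : Basis (Fin (finrank (ZMod p) V)) (ZMod p) V := Module.finBasis (ZMod p) V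
  have hM : LinearMap.BilinForm.toMatrix (b.baseChange k) (bcForm p k V B)
      = (LinearMap.BilinForm.toMatrix b B).map (algebraMap (ZMod p) k) := by
    ext i j
    rw [Matrix.map_apply, LinearMap.BilinForm.toMatrix_apply, LinearMap.BilinForm.toMatrix_apply,
      Basis.baseChange_apply, Basis.baseChange_apply, LinearMap.BilinForm.baseChange_tmul,
      Algebra.smul_def, mul_one, mul_one]
  rw [LinearMap.BilinForm.nondegenerate_iff_det_ne_zero (b.baseChange k), hM]
  have hdet2 : (((LinearMap.BilinForm.toMatrix b) B).map ⇑(algebraMap (ZMod p) k)).det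
      = algebraMap (ZMod p) k ((LinearMap.BilinForm.toMatrix b B).det) :=
    ((algebraMap (ZMod p) k).map_det _).symm
  rw [hdet2]
  have hdet : (LinearMap.BilinForm.toMatrix b B).det ≠ 0 :=
    ((LinearMap.BilinForm.nondegenerate_iff_det_ne_zero b).mp hnd)
  intro h
  exact hdet ((map_eq_zero_iff _ (algebraMap (ZMod p) k).injective).mp h)

end Aux2
section Aux3

set_option linter.unusedSectionVars false

open Module Submodule

variable (p : ℕ) [Fact p.Prime] (k : Type) [Field k] [CharP k p] [Algebra (ZMod p) k]
  (V : Type) [AddCommGroup V] [Module (ZMod p) V] [IsAlgClosed k]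

lemma key_nonzero
    (σ₀ : ℕ) (hσ : 1 ≤ σ₀)
    (hdim : Module.finrank (ZMod p) V = 2 * σ₀)
    (B : LinearMap.BilinForm (ZMod p) V)
    (hsymm : B.IsSymm) (hnd : B.Nondegenerate)
    (K : Submodule k (k ⊗[ZMod p] V))
    (hK : IsStrictlyCharacteristicSub p k V σ₀ B K)
    (e₀ : k ⊗[ZMod p] V)
    (he₀ : Submodule.span k {e₀} = lK p k V σ₀ K) :
    bcForm p k V B e₀ ((⇑(frobT p k V))^[σ₀] e₀) ≠ 0 := by
  classical
  haveI : FiniteDimensional (ZMod p) V :=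
    FiniteDimensional.of_finrank_pos (by omega)
  haveI : FiniteDimensional k (k ⊗[ZMod p] V) := Module.Finite.base_change _ _ _
  have hrankM : finrank k (k ⊗[ZMod p] V) = 2 * σ₀ := by
    rw [Module.finrank_baseChange, hdim]
  set φ := frobT p k V with hφ
  set bc := bcForm p k V B with hbc
  have hinj : Function.Injective ⇑φ := frobT_injective p k V
  -- the iterated images of K
  set P : ℕ → Submodule k (k ⊗[ZMod p] V) := fun i => (Submodule.map φ)^[i] K with hPdef
  have hP0 : P 0 = K := rfl
  have hPsucc : ∀ i, P (i + 1) = Submodule.map φ (P i) := fun i =>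
    Function.iterate_succ_apply' _ _ _
  have hPmem : ∀ i, ∀ x ∈ P i, φ x ∈ P (i + 1) := by
    intro i x hx
    rw [hPsucc]
    exact Submodule.mem_map_of_mem hx
  have hPiso : ∀ i, ∀ x ∈ P i, ∀ y ∈ P i, bc x y = 0 := by
    intro i
    induction i with
    | zero => exact hK.1.1
    | succ i ih =>
      intro x hx y hy
      rw [hPsucc] at hx hy
      obtain ⟨x', hx', rfl⟩ := hx
      obtain ⟨y', hy', rfl⟩ := hy
      rw [show bc (φ x') (φ y') = (bc x' y') ^ p from bcForm_frob p k V B x' y',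
        ih x' hx' y' hy', zero_pow (Fact.out : p.Prime).ne_zero]
  have hPimage : ∀ i, (P i : Set (k ⊗[ZMod p] V)) = (⇑φ)^[i] '' (K : Set _) := by
    intro i
    induction i with
    | zero =>
      rw [Function.iterate_zero, Set.image_id]
      rfl
    | succ i ih =>
      rw [hPsucc, Submodule.map_coe, ih, ← Set.image_comp, ← Function.iterate_succ']
  -- the partial sums
  set S : ℕ → Submodule k (k ⊗[ZMod p] V) := fun i => (Finset.range (i + 1)).sup P
    with hSdef
  have hS0 : S 0 = K := by simp [hSdef, hP0]
  have hSsucc : ∀ i, S (i + 1) = S i ⊔ P (i + 1) := by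
    intro i
    show (Finset.range (i + 1 + 1)).sup P = (Finset.range (i + 1)).sup P ⊔ P (i + 1)
    rw [Finset.range_add_one, Finset.sup_insert, sup_comm]
  have hPleS : ∀ i j, j ≤ i → P j ≤ S i := by
    intro i j hj
    exact Finset.le_sup (Finset.mem_range.mpr (by omega))
  have hSmono : ∀ i, S i ≤ S (i + 1) := by
    intro i; rw [hSsucc]; exact le_sup_left
  have hφS : ∀ i, Submodule.map φ (S i) ≤ S (i + 1) := by
    intro i
    induction i with
    | zero =>
      have h1 : Submodule.map φ (S 0) = P 1 := by rw [hS0, ← hP0, ← hPsucc]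
      rw [h1]
      exact hPleS 1 1 le_rfl
    | succ i ih =>
      rw [hSsucc i, Submodule.map_sup]
      apply sup_le
      · exact le_trans ih (hSmono (i + 1))
      · rw [← hPsucc]
        exact hPleS (i + 2) (i + 2) le_rfl
  have hstab : ∀ i, S (i + 1) = S i → S i = ⊤ := by
    intro i heq
    have hmaple : Submodule.map φ (S i) ≤ S i := heq ▸ hφS i
    have hPle : ∀ j, P j ≤ S i := by
      intro j
      induction j with
      | zero => exact hPleS i 0 (Nat.zero_le _)
      | succ j ihj =>
        rw [hPsucc]
        exact le_trans (Submodule.map_mono ihj) hmaple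
    have htople : (⊤ : Submodule k (k ⊗[ZMod p] V)) ≤ S i := by
      rw [← hK.2]
      exact iSup_le hPle
    exact top_le_iff.mp htople
  have hrankP : ∀ i, finrank k (P i) = σ₀ := by
    intro i
    induction i with
    | zero => exact hK.1.2.1
    | succ i ih => rw [hPsucc, finrank_map_frobT, ih]
  have hStop : S σ₀ = ⊤ := by
    have hstep : ∀ i, i ≤ σ₀ → S i = ⊤ ∨ σ₀ + i ≤ finrank k (S i) := by
      intro i
      induction i with
      | zero =>
        intro _
        right
        rw [hS0, hK.1.2.1]
        omega
      | succ i ih =>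
        intro hi
        rcases ih (by omega) with h | h
        · left
          exact top_le_iff.mp (h ▸ hSmono i)
        · by_cases heq : S (i + 1) = S i
          · left
            exact top_le_iff.mp ((hstab i heq) ▸ hSmono i)
          · right
            have hlt : S i < S (i + 1) := lt_of_le_of_ne (hSmono i) (Ne.symm heq)
            have := Submodule.finrank_lt_finrank_of_lt hlt
            omega
    rcases hstep σ₀ le_rfl with h | h
    · exact h
    · apply Submodule.eq_top_of_finrank_eq
      have hle := Submodule.finrank_le (S σ₀)
      omega
  -- the intersection chain
  set Kc : ℕ → Submodule k (k ⊗[ZMod p] V) :=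
    fun i => Nat.rec K (fun _ Ki => K ⊓ Submodule.map φ Ki) i with hKcdef
  have hKc0 : Kc 0 = K := rfl
  have hKcsucc : ∀ i, Kc (i + 1) = K ⊓ Submodule.map φ (Kc i) := fun _ => rfl
  have hKcK : ∀ i, Kc i ≤ K := by
    intro i
    cases i with
    | zero => exact le_rfl
    | succ i => rw [hKcsucc]; exact inf_le_left
  have hKcP : ∀ i j, j ≤ i → Kc i ≤ P j := by
    intro i
    induction i with
    | zero =>
      intro j hj
      interval_cases j
      exact le_rfl
    | succ i ih =>
      intro j hj
      cases j with
      | zero => exact hKcK (i + 1)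
      | succ j =>
        rw [hKcsucc, hPsucc]
        exact le_trans inf_le_right (Submodule.map_mono (ih j (by omega)))
  have hKcrank : ∀ i, σ₀ ≤ finrank k (Kc i) + i := by
    intro i
    induction i with
    | zero =>
      rw [hKc0, hK.1.2.1]
      omega
    | succ i ih =>
      have h5 : finrank k K = σ₀ := hK.1.2.1
      have h1 := Submodule.finrank_sup_add_finrank_inf_eq K (Submodule.map φ (Kc i))
      have h2 : finrank k (Submodule.map φ (Kc i)) = finrank k (Kc i) :=
        finrank_map_frobT p k V _
      have h3 : K ⊔ Submodule.map φ (Kc i) ≤ K ⊔ Submodule.map φ K :=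
        sup_le_sup_left (Submodule.map_mono (hKcK i)) K
      have h4 : finrank k ↥(K ⊔ Submodule.map φ (Kc i)) ≤ σ₀ + 1 := by
        have := Submodule.finrank_mono h3
        rw [hK.1.2.2] at this
        exact this
      rw [hKcsucc]
      omega
  -- e₀ is nonzero
  have hlKP : ∀ i < σ₀, lK p k V σ₀ K ≤ P i := by
    intro i hi
    exact iInf_le _ (⟨i, hi⟩ : Fin σ₀)
  have hKclK : Kc (σ₀ - 1) ≤ lK p k V σ₀ K := by
    apply le_iInf
    intro i
    exact hKcP (σ₀ - 1) i (by omega)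
  have he0ne : e₀ ≠ 0 := by
    intro h
    rw [h, Submodule.span_zero_singleton] at he₀
    have h1 : Kc (σ₀ - 1) ≤ ⊥ := he₀ ▸ hKclK
    have h2 : finrank k (Kc (σ₀ - 1)) = 0 := by
      rw [le_bot_iff.mp h1, finrank_bot]
    have := hKcrank (σ₀ - 1)
    omega
  have he₀P : ∀ i < σ₀, e₀ ∈ P i := by
    intro i hi
    exact hlKP i hi (he₀ ▸ Submodule.mem_span_singleton_self e₀)
  -- the sequence of iterates
  set e : ℕ → (k ⊗[ZMod p] V) := fun j => (⇑φ)^[j] e₀ with hedef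
  have he0 : e 0 = e₀ := rfl
  have hesucc : ∀ j, e (j + 1) = φ (e j) := fun j => Function.iterate_succ_apply' _ _ _
  have heP : ∀ i < σ₀, ∀ j, e j ∈ P (i + j) := by
    intro i hi j
    induction j with
    | zero => exact he₀P i hi
    | succ j ihj =>
      rw [hesucc, show i + (j + 1) = (i + j) + 1 from rfl]
      exact hPmem _ _ ihj
  have hzero' : ∀ x : k ⊗[ZMod p] V, (∀ j ≤ σ₀, x ∈ P j) → x = 0 := by
    intro x hx
    apply (bcForm_nondeg p k V B hnd).1 x
    intro y
    have hy : y ∈ S σ₀ := hStop ▸ Submodule.mem_top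
    have hker : S σ₀ ≤ LinearMap.ker (bc x) := by
      apply Finset.sup_le
      intro j hj
      intro z hz
      rw [LinearMap.mem_ker]
      exact hPiso j x (hx j (by simpa using Nat.lt_succ_iff.mp (Finset.mem_range.mp hj))) z hz
    exact LinearMap.mem_ker.mp (hker hy)
  have hφe₀K : φ e₀ ∉ K := by
    intro h
    apply he0ne
    apply hinj
    rw [map_zero]
    apply hzero'
    intro j hj
    cases j with
    | zero => exact h
    | succ j => exact hPmem j e₀ (he₀P j (by omega))
  -- now the contradiction argument
  intro habs
  have habs' : bc (e 0) (e σ₀) = 0 := habs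
  have hd : ∀ i d, d < σ₀ → bc (e i) (e (i + d)) = 0 := by
    intro i d hdlt
    have h1 : e i ∈ P (i + d) := by
      have := heP d hdlt i
      rwa [Nat.add_comm d i] at this
    have h2 : e (i + d) ∈ P (i + d) := by
      have := heP 0 (by omega) (i + d)
      rwa [Nat.zero_add] at this
    exact hPiso (i + d) _ h1 _ h2
  have ha : ∀ i, bc (e i) (e (i + σ₀)) = 0 := by
    intro i
    induction i with
    | zero => rw [Nat.zero_add]; exact habs'
    | succ i ihi =>
      have : e (i + 1 + σ₀) = φ (e (i + σ₀)) := by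
        rw [show i + 1 + σ₀ = (i + σ₀) + 1 by omega, hesucc]
      rw [hesucc, this,
        show bc (φ (e i)) (φ (e (i + σ₀))) = (bc (e i) (e (i + σ₀))) ^ p
          from bcForm_frob p k V B _ _, ihi, zero_pow (Fact.out : p.Prime).ne_zero]
  have hall : ∀ i j, i ≤ σ₀ → j ≤ σ₀ → bc (e i) (e j) = 0 := by
    have haux : ∀ i j, i ≤ j → i ≤ σ₀ → j ≤ σ₀ → bc (e i) (e j) = 0 := by
      intro i j hij hi hj
      rcases Nat.lt_or_ge (j - i) σ₀ with h | h
      · have := hd i (j - i) h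
        rwa [show i + (j - i) = j by omega] at this
      · have hji : j - i = σ₀ := by omega
        have := ha i
        rwa [show i + σ₀ = j by omega] at this
    intro i j hi hj
    rcases le_total i j with h | h
    · exact haux i j h hi hj
    · rw [hbc, bcForm_symm p k V B hsymm, ← hbc]
      exact haux j i h hj hi
  -- linear independence of e 0, ..., e σ₀
  have hLI : ∀ m, m ≤ σ₀ → LinearIndependent k (fun j : Fin (m + 1) => e (j : ℕ)) := by
    intro m
    induction m with
    | zero =>
      intro _
      haveI : Unique (Fin (0 + 1)) := inferInstanceAs (Unique (Fin 1))
      apply linearIndependent_unique_iff.mpr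
      simpa [he0] using he0ne
    | succ m ihm =>
      intro hm
      have ih := ihm (by omega)
      have hsnoc : (fun j : Fin (m + 2) => e (j : ℕ)) =
          Fin.snoc (fun j : Fin (m + 1) => e (j : ℕ)) (e (m + 1)) := by
        funext j
        refine Fin.lastCases ?_ ?_ j
        · rw [Fin.snoc_last, Fin.val_last]
        · intro i
          rw [Fin.snoc_castSucc, Fin.coe_castSucc]
      rw [hsnoc]
      apply linearIndependent_fin_snoc.mpr
      refine ⟨ih, ?_⟩
      intro hmem
      have hsub : Submodule.span k (Set.range fun j : Fin (m + 1) => e (j : ℕ)) ≤ P m := by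
        rw [Submodule.span_le]
        rintro _ ⟨j, rfl⟩
        have hj : (j : ℕ) ≤ m := Nat.lt_succ_iff.mp j.2
        have := heP (m - (j : ℕ)) (by omega) (j : ℕ)
        rwa [show m - (j : ℕ) + (j : ℕ) = m by omega] at this
      have hePm : e (m + 1) ∈ P m := hsub hmem
      have : e (m + 1) ∈ (⇑φ)^[m] '' (K : Set _) := by
        rw [← hPimage]
        exact hePm
      obtain ⟨y, hyK, hy⟩ := this
      have hy2 : (⇑φ)^[m] y = (⇑φ)^[m] (φ e₀) := by
        rw [hy]
        show (⇑φ)^[m + 1] e₀ = (⇑φ)^[m] (φ e₀)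
        exact Function.iterate_succ_apply _ _ _
      have : y = φ e₀ := hinj.iterate m hy2
      exact hφe₀K (this ▸ hyK)
  -- the isotropic subspace of dimension σ₀ + 1
  set W : Submodule k (k ⊗[ZMod p] V) :=
    Submodule.span k (Set.range fun j : Fin (σ₀ + 1) => e (j : ℕ)) with hWdef
  have hWgen : ∀ j : Fin (σ₀ + 1), ∀ y ∈ W, bc (e (j : ℕ)) y = 0 := by
    intro j y hy
    have hker : W ≤ LinearMap.ker (bc (e (j : ℕ))) := by
      rw [hWdef, Submodule.span_le]
      rintro _ ⟨i, rfl⟩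
      rw [SetLike.mem_coe, LinearMap.mem_ker]
      exact hall _ _ (Nat.lt_succ_iff.mp j.2) (Nat.lt_succ_iff.mp i.2)
    exact LinearMap.mem_ker.mp (hker hy)
  have hWiso : ∀ x ∈ W, ∀ y ∈ W, bc x y = 0 := by
    intro x hx y hy
    have hker : W ≤ LinearMap.ker (bc.flip y) := by
      rw [hWdef, Submodule.span_le]
      rintro _ ⟨i, rfl⟩
      simp only [SetLike.mem_coe, LinearMap.mem_ker, LinearMap.flip_apply]
      exact hWgen i y hy
    have := LinearMap.mem_ker.mp (hker hx)
    simpa [LinearMap.flip_apply] using this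
  have hrankW : finrank k W = σ₀ + 1 := by
    rw [hWdef, finrank_span_eq_card (hLI σ₀ le_rfl), Fintype.card_fin]
  have hbcnd : bc.Nondegenerate := bcForm_nondeg p k V B hnd
  have hbcrefl : bc.IsRefl := by
    intro x y h
    rw [hbc, bcForm_symm p k V B hsymm, ← hbc]
    exact h
  have hWorth : W ≤ bc.orthogonal W := by
    intro x hx
    rw [LinearMap.BilinForm.mem_orthogonal_iff]
    intro n hn
    exact hWiso n hn x hx
  have horth := LinearMap.BilinForm.finrank_orthogonal hbcnd W
  have hle : finrank k W ≤ finrank k (bc.orthogonal W) := Submodule.finrank_mono hWorth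
  rw [horth, hrankW, hrankM] at hle
  omega

end Aux3
section Aux4

set_option linter.unusedSectionVars false

open Module Submodule

variable (p : ℕ) [Fact p.Prime] (k : Type) [Field k] [CharP k p] [Algebra (ZMod p) k]
  (V : Type) [AddCommGroup V] [Module (ZMod p) V] [IsAlgClosed k]

lemma frobT_iter_smul (n : ℕ) (c : k) (x : k ⊗[ZMod p] V) :
    (⇑(frobT p k V))^[n] (c • x) = c ^ (p ^ n) • (⇑(frobT p k V))^[n] x := by
  induction n with
  | zero => simp
  | succ n ih =>
    rw [Function.iterate_succ_apply', ih, LinearMap.map_smulₛₗ,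
      Function.iterate_succ_apply', frobenius_def, ← pow_mul, ← pow_succ]

end Aux4
/-- normalization of a generator of `l_K`. -/
theorem statement1
    (p : ℕ) [Fact p.Prime] (hodd : Odd p)
    (k : Type) [Field k] [CharP k p] [Algebra (ZMod p) k] [IsAlgClosed k]
    (V : Type) [AddCommGroup V] [Module (ZMod p) V]
    (σ₀ : ℕ) (hσ : 1 ≤ σ₀)
    (hdim : Module.finrank (ZMod p) V = 2 * σ₀)
    (B : LinearMap.BilinForm (ZMod p) V)
    (hsymm : B.IsSymm) (hnd : B.Nondegenerate)
    (hnn : ∀ W : Submodule (ZMod p) V,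
      (∀ x ∈ W, ∀ y ∈ W, B x y = 0) → Module.finrank (ZMod p) W ≠ σ₀)
    (K : Submodule k (k ⊗[ZMod p] V))
    (hK : IsStrictlyCharacteristicSub p k V σ₀ B K)
    (e₀ : k ⊗[ZMod p] V)
    (he₀ : Submodule.span k {e₀} = lK p k V σ₀ K) :
    bcForm p k V B e₀ ((⇑(frobT p k V))^[σ₀] e₀) ≠ 0 ∧
    (∃ e : k ⊗[ZMod p] V, Submodule.span k {e} = lK p k V σ₀ K ∧
      bcForm p k V B e ((⇑(frobT p k V))^[σ₀] e) = 1) ∧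
    (∀ e e' : k ⊗[ZMod p] V,
      Submodule.span k {e} = lK p k V σ₀ K →
      Submodule.span k {e'} = lK p k V σ₀ K →
      bcForm p k V B e ((⇑(frobT p k V))^[σ₀] e) = 1 →
      bcForm p k V B e' ((⇑(frobT p k V))^[σ₀] e') = 1 →
      ∃ ζ : k, ζ ^ (p ^ σ₀ + 1) = 1 ∧ e' = ζ • e) := by
  have key := key_nonzero p k V σ₀ hσ hdim B hsymm hnd K hK e₀ he₀
  set a := bcForm p k V B e₀ ((⇑(frobT p k V))^[σ₀] e₀) with ha
  refine ⟨key, ?_, ?_⟩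
  · obtain ⟨lam, hlam⟩ := IsAlgClosed.exists_pow_nat_eq (k := k) a⁻¹
      (n := p ^ σ₀ + 1) (by positivity)
    have hlne : lam ≠ 0 := by
      intro h
      rw [h, zero_pow (by positivity), eq_comm, inv_eq_zero] at hlam
      exact key hlam
    refine ⟨lam • e₀, ?_, ?_⟩
    · rw [← he₀]
      exact Submodule.span_singleton_smul_eq (IsUnit.mk0 lam hlne) e₀
    · rw [frobT_iter_smul]
      simp only [map_smul, LinearMap.smul_apply, smul_eq_mul]
      have h2 : lam ^ p ^ σ₀ * (lam * a) = lam ^ (p ^ σ₀ + 1) * a := by ring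
      rw [h2, hlam, inv_mul_cancel₀ key]
  · intro e e' he he' h1 h1'
    have hmem : e' ∈ Submodule.span k {e} := by
      rw [he, ← he']
      exact Submodule.mem_span_singleton_self e'
    obtain ⟨ζ, hζ⟩ := Submodule.mem_span_singleton.mp hmem
    refine ⟨ζ, ?_, hζ.symm⟩
    rw [← hζ, frobT_iter_smul] at h1'
    simp only [map_smul, LinearMap.smul_apply, smul_eq_mul, h1, mul_one] at h1'
    calc ζ ^ (p ^ σ₀ + 1) = ζ ^ p ^ σ₀ * ζ := by ring
      _ = 1 := h1'
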